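/- arXiv:1708.07870 — 2 statements merged into one kernel-verified Lean document; each statement's English description precedes it below -/
import Mathlib

section
/- Let w : [A0, A0+δ] → ℂ have the form w(α) = w₁(α) + √(α - A0) · w₂(α) with w₁, w₂ smooth on [A0, A0+δ]. Let g : [A0, A0+δ'] → [A0, A0+δ] be smooth, strictly increasing, with g(A0) = A0 and g(t) - A0 = C·h(t-A0)² for a smooth function h with h(0) = 0, h > 0 on (0,δ'] and C > 0. Then the composed function v(t) = w(g(t))·g'(t) is smooth on [A0, A0+δ']. -/
open Set

/-- If `w(α) = w₁(α) + √(α - A0)·w₂(α)` with `w₁, w₂` smooth, and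
`g(t) - A0 = C·h(t - A0)²` with `h` smooth, `h(0) = 0`, `h > 0` on `(0,δ']`,
`g` smooth and strictly increasing with `g(A0) = A0`, then
`v(t) = w(g(t))·g'(t)` is smooth on `[A0, A0+δ']`. -/
theorem stmt_6 (A0 δ δ' C : ℝ) (hδ : 0 < δ) (hδ' : 0 < δ') (hC : 0 < C)
    (w w₁ w₂ : ℝ → ℂ) (hw₁ : ContDiff ℝ (⊤ : ℕ∞) w₁) (hw₂ : ContDiff ℝ (⊤ : ℕ∞) w₂)
    (hw : ∀ α ∈ Set.Icc A0 (A0 + δ), w α = w₁ α + Real.sqrt (α - A0) * w₂ α)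
    (g : ℝ → ℝ) (hg : ContDiff ℝ (⊤ : ℕ∞) g)
    (hmono : StrictMonoOn g (Set.Icc A0 (A0 + δ')))
    (hmaps : Set.MapsTo g (Set.Icc A0 (A0 + δ')) (Set.Icc A0 (A0 + δ)))
    (hgA0 : g A0 = A0)
    (h : ℝ → ℝ) (hh : ContDiff ℝ (⊤ : ℕ∞) h) (hh0 : h 0 = 0)
    (hhpos : ∀ t ∈ Set.Ioc 0 δ', 0 < h t)
    (hgh : ∀ t ∈ Set.Icc A0 (A0 + δ'), g t - A0 = C * (h (t - A0)) ^ 2) :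
    ContDiffOn ℝ (⊤ : ℕ∞) (fun t => w (g t) * (Complex.ofReal (deriv g t))) (Set.Icc A0 (A0 + δ')) := by
  have hderiv : ContDiff ℝ (⊤ : ℕ∞) (deriv g) := by
    have h1 : ContDiff ℝ (((⊤ : ℕ∞) : WithTop ℕ∞) + 1) g := by
      rw [show (((⊤ : ℕ∞) : WithTop ℕ∞) + 1) = ((⊤ : ℕ∞) : WithTop ℕ∞) from rfl]; exact hg
    exact (contDiff_succ_iff_deriv.mp h1).2.2
  have hsmooth : ContDiff ℝ (⊤ : ℕ∞) (fun t =>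
      (w₁ (g t) + (Real.sqrt C * h (t - A0) : ℝ) * w₂ (g t)) * (Complex.ofReal (deriv g t))) := by
    apply ContDiff.mul
    · apply ContDiff.add (hw₁.comp hg)
      apply ContDiff.mul _ (hw₂.comp hg)
      exact Complex.ofRealCLM.contDiff.comp
        ((contDiff_const.mul (hh.comp (contDiff_id.sub contDiff_const))))
    · exact Complex.ofRealCLM.contDiff.comp hderiv
  apply (hsmooth.contDiffOn).congr
  intro t ht
  have hgm := hmaps ht
  rw [hw (g t) hgm]
  have hnn : 0 ≤ h (t - A0) := by
    rcases eq_or_lt_of_le ht.1 with heq | hlt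
    · simp [← heq, hh0]
    · exact le_of_lt (hhpos (t - A0) ⟨by linarith, by linarith [ht.2]⟩)
  have : Real.sqrt (g t - A0) = Real.sqrt C * h (t - A0) := by
    rw [hgh t ht, Real.sqrt_mul hC.le, Real.sqrt_sq hnn]
  rw [this]
end

section
/- Let h : [0,δ) → ℝ be smooth with h(t) = tᵐ⁺¹ψ(t) for some smooth ψ with ψ(0) ≠ 0, m ≥ 1, and let w₁, w₂ : [A0, A0+δ'] → H be smooth Hilbert-space-valued functions. Set g(t) = A0 + C·h(t−A0)² with C > 0, and v(t) = [w₁(g(t)) + √(g(t)−A0)·w₂(g(t))]·g'(t) for t ∈ [A0, A0+δ'') with δ'' small enough that g maps into the domain. Then for every ℓ = 0,1,...,2m, ‖v^{(ℓ)}(t)‖_H → 0 as t → A0⁺. -/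
open Set Filter

lemma aux_pow_smul {H : Type*} [NormedAddCommGroup H] [NormedSpace ℝ H] (a : ℝ) :
    ∀ (ℓ : ℕ) (n : ℕ) (f : ℝ → H), ContDiff ℝ (⊤ : ℕ∞) f → ℓ ≤ n →
    ∃ g : ℝ → H, ContDiff ℝ (⊤ : ℕ∞) g ∧
      ∀ t, iteratedDeriv ℓ (fun t => (t - a) ^ n • f t) t = (t - a) ^ (n - ℓ) • g t := by
  intro ℓ
  induction ℓ with
  | zero =>
    intro n f hf _
    exact ⟨f, hf, fun t => by simp [iteratedDeriv_zero]⟩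
  | succ ℓ ih =>
    intro n f hf hln
    obtain ⟨g, hg, hgeq⟩ := ih n f hf (Nat.le_of_succ_le hln)
    have hderivg : ContDiff ℝ (⊤ : ℕ∞) (deriv g) := (contDiff_infty_iff_deriv.mp hg).2
    refine ⟨fun t => ((n - ℓ : ℕ) : ℝ) • g t + (t - a) • deriv g t,
      (contDiff_const.smul hg).add ((contDiff_id.sub contDiff_const).smul hderivg), fun t => ?_⟩
    rw [iteratedDeriv_succ]
    have hfun : iteratedDeriv ℓ (fun t => (t - a) ^ n • f t) =
        fun t => (t - a) ^ (n - ℓ) • g t := funext hgeq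
    rw [hfun]
    have hp : HasDerivAt (fun t : ℝ => (t - a) ^ (n - ℓ))
        (((n - ℓ : ℕ) : ℝ) * (t - a) ^ (n - ℓ - 1)) t := by
      have := ((hasDerivAt_id t).sub_const a).pow (n - ℓ)
      simp at this; exact this
    have hgd : HasDerivAt g (deriv g t) t :=
      (hg.differentiable (by norm_num) t).hasDerivAt
    have := hp.smul hgd
    rw [show deriv (fun t => (t - a) ^ (n - ℓ) • g t) t = _ from this.deriv]
    have h1 : 1 ≤ n - ℓ := Nat.le_sub_of_add_le (by omega)
    have hpow : (t - a) ^ (n - ℓ) = (t - a) ^ (n - (ℓ + 1)) * (t - a) := by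
      rw [← pow_succ]
      congr 1
      omega
    have hpow' : (t - a) ^ (n - ℓ - 1) = (t - a) ^ (n - (ℓ + 1)) := by congr 1
    rw [hpow, hpow']
    rw [smul_add, smul_smul, mul_smul]
    rw [mul_comm, mul_smul]
    module

/-- If `h(t) = t^{m+1}ψ(t)` with `ψ(0) ≠ 0`, `g(t) = A0 + C·h(t-A0)²` and
`v(t) = [w₁(g(t)) + √(g(t)-A0)·w₂(g(t))]·g'(t)` with `w₁, w₂` smooth Hilbert-space
valued, then `‖v^{(ℓ)}(t)‖ → 0` as `t → A0⁺` for every `ℓ = 0,…,2m`. -/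
theorem stmt_14 {H : Type*} [NormedAddCommGroup H] [InnerProductSpace ℝ H]
    (A0 δ δ' C : ℝ) (hδ : 0 < δ) (hδ' : 0 < δ') (hC : 0 < C)
    (m : ℕ) (hm : 1 ≤ m) (ψ : ℝ → ℝ) (hψ : ContDiff ℝ (⊤ : ℕ∞) ψ) (hψ0 : ψ 0 ≠ 0)
    (h : ℝ → ℝ) (hh : ∀ t, h t = t ^ (m + 1) * ψ t)
    (w₁ w₂ : ℝ → H) (hw₁ : ContDiff ℝ (⊤ : ℕ∞) w₁) (hw₂ : ContDiff ℝ (⊤ : ℕ∞) w₂)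
    (g : ℝ → ℝ) (hg : ∀ t, g t = A0 + C * (h (t - A0)) ^ 2)
    (v : ℝ → H)
    (hv : ∀ t, v t = (deriv g t) • (w₁ (g t) + Real.sqrt (g t - A0) • w₂ (g t))) :
    ∀ ℓ ≤ 2 * m, Filter.Tendsto (fun t => ‖iteratedDeriv ℓ v t‖)
      (nhdsWithin A0 (Set.Ioi A0)) (nhds 0) := by
  intro ℓ hℓ
  -- smooth (C^∞) versions of the hypotheses
  have hψ' : ContDiff ℝ (⊤ : ℕ∞) ψ := hψ.of_le (by simp)
  have hw₁' : ContDiff ℝ (⊤ : ℕ∞) w₁ := hw₁.of_le (by simp)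
  have hw₂' : ContDiff ℝ (⊤ : ℕ∞) w₂ := hw₂.of_le (by simp)
  have hhe : h = fun t => t ^ (m + 1) * ψ t := funext hh
  have hhs : ContDiff ℝ (⊤ : ℕ∞) h := by
    rw [hhe]; exact (contDiff_id.pow _).mul hψ'
  set φ : ℝ → ℝ := fun s => ((m : ℝ) + 1) * ψ s + s * deriv ψ s with hφdef
  have hψd : ContDiff ℝ (⊤ : ℕ∞) (deriv ψ) := (contDiff_infty_iff_deriv.mp hψ').2
  have hφ : ContDiff ℝ (⊤ : ℕ∞) φ :=
    (contDiff_const.mul hψ').add (contDiff_id.mul hψd)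
  -- derivative of h
  have hhd : ∀ s : ℝ, HasDerivAt h (s ^ m * φ s) s := by
    intro s
    have h1 : HasDerivAt (fun s : ℝ => s ^ (m + 1)) (((m : ℝ) + 1) * s ^ m) s := by
      simpa using hasDerivAt_pow (m + 1) s
    have h2 : HasDerivAt ψ (deriv ψ s) s := (hψ'.differentiable (by norm_num) s).hasDerivAt
    have := h1.mul h2
    rw [hhe]
    refine HasDerivAt.congr_deriv this ?_
    simp only [hφdef, pow_succ]
    ring
  -- smoothness of g
  have hge : g = fun t => A0 + C * (h (t - A0)) ^ 2 := funext hg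
  have hgs : ContDiff ℝ (⊤ : ℕ∞) g := by
    rw [hge]
    exact contDiff_const.add
      (contDiff_const.mul ((hhs.comp (contDiff_id.sub contDiff_const)).pow 2))
  -- derivative of g
  have hgd : ∀ t : ℝ, HasDerivAt g
      (2 * C * (t - A0) ^ (2 * m + 1) * ψ (t - A0) * φ (t - A0)) t := by
    intro t
    have hu : HasDerivAt (fun t : ℝ => t - A0) 1 t := (hasDerivAt_id t).sub_const A0
    have hh2 : HasDerivAt (fun t => h (t - A0)) ((t - A0) ^ m * φ (t - A0) * 1) t :=
      (hhd (t - A0)).comp t hu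
    have hh3 := ((hh2.pow 2).const_mul C).const_add A0
    rw [hge]
    refine HasDerivAt.congr_deriv hh3 ?_
    rw [hh]
    have hp : (t - A0) ^ (2 * m + 1) = (t - A0) ^ (m + 1) * (t - A0) ^ m := by
      rw [← pow_add]; congr 1; omega
    rw [hp]
    push_cast
    ring
  have derivg : ∀ t : ℝ, deriv g t =
      2 * C * (t - A0) ^ (2 * m + 1) * ψ (t - A0) * φ (t - A0) := fun t => (hgd t).deriv
  -- sign of ψ near 0
  obtain ⟨η, hη, hηb⟩ := Metric.continuousAt_iff.mp (hψ.continuous.continuousAt (x := 0))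
    |ψ 0| (abs_pos.mpr hψ0)
  set ε : ℝ := if 0 < ψ 0 then 1 else -1 with hεdef
  have hsign : ∀ s : ℝ, |s| < η → |ψ s| = ε * ψ s := by
    intro s hs
    have hd : |ψ s - ψ 0| < |ψ 0| := by
      have := hηb (by simpa [Real.dist_eq] using hs)
      simpa [Real.dist_eq] using this
    by_cases h0 : 0 < ψ 0
    · have : 0 < ψ s := by
        rw [abs_of_pos h0] at hd
        cases abs_lt.mp hd with
        | intro h1 h2 => linarith
      rw [abs_of_pos this, hεdef, if_pos h0, one_mul]
    · have hneg : ψ 0 < 0 := lt_of_le_of_ne (not_lt.mp h0) hψ0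
      have : ψ s < 0 := by
        rw [abs_of_neg hneg] at hd
        cases abs_lt.mp hd with
        | intro h1 h2 => linarith
      rw [abs_of_neg this, hεdef, if_neg h0]
      ring
  -- the smooth replacement for v
  set Φ : ℝ → H := fun t => (2 * C * ψ (t - A0) * φ (t - A0)) • w₁ (g t) +
      (2 * C * Real.sqrt C * ε * ((t - A0) ^ (m + 1) * (ψ (t - A0)) ^ 2 * φ (t - A0))) •
        w₂ (g t) with hΦdef
  have hsub : ContDiff ℝ (⊤ : ℕ∞) (fun t : ℝ => t - A0) := contDiff_id.sub contDiff_const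
  have hΦ : ContDiff ℝ (⊤ : ℕ∞) Φ := by
    apply ContDiff.add
    · exact ((contDiff_const.mul (hψ'.comp hsub)).mul (hφ.comp hsub)).smul (hw₁'.comp hgs)
    · exact (contDiff_const.mul (((hsub.pow _).mul ((hψ'.comp hsub).pow 2)).mul
        (hφ.comp hsub))).smul (hw₂'.comp hgs)
  -- v agrees with the smooth function on a right neighborhood
  have key : ∀ t ∈ Ioo A0 (A0 + η), v t = (t - A0) ^ (2 * m + 1) • Φ t := by
    intro t ht
    have hts : 0 < t - A0 := by simp [Set.mem_Ioo] at ht; linarith [ht.1]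
    have htη : |t - A0| < η := by
      rw [abs_of_pos hts]; simp [Set.mem_Ioo] at ht; linarith [ht.2]
    have hsqrt : Real.sqrt (g t - A0) = Real.sqrt C * ((t - A0) ^ (m + 1) * (ε * ψ (t - A0))) := by
      have h1 : g t - A0 = C * (h (t - A0)) ^ 2 := by rw [hg]; ring
      rw [h1, Real.sqrt_mul hC.le, Real.sqrt_sq_eq_abs, hh, abs_mul, abs_pow,
        abs_of_pos hts, hsign _ htη]
    rw [hv, derivg, hsqrt, hΦdef]
    rw [smul_add, smul_add, smul_smul, smul_smul, smul_smul]
    congr 1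
    · congr 1
      ring
    · congr 1
      ring
  -- apply the auxiliary lemma
  obtain ⟨G, hG, hGeq⟩ := aux_pow_smul A0 ℓ (2 * m + 1) Φ hΦ (by omega)
  have hmem : Ioo A0 (A0 + η) ∈ nhdsWithin A0 (Set.Ioi A0) :=
    Ioo_mem_nhdsGT_of_mem ⟨le_rfl, by linarith⟩
  have hk : 2 * m + 1 - ℓ ≠ 0 := by omega
  have hbase : Tendsto (fun t => ‖(t - A0) ^ (2 * m + 1 - ℓ) • G t‖) (nhds A0) (nhds 0) := by
    have hc : Continuous fun t : ℝ => ‖(t - A0) ^ (2 * m + 1 - ℓ) • G t‖ :=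
      (((continuous_id.sub continuous_const).pow _).smul hG.continuous).norm
    have h0 : ‖((A0 : ℝ) - A0) ^ (2 * m + 1 - ℓ) • G A0‖ = 0 := by
      simp [zero_pow hk]
    have := hc.tendsto A0
    rwa [h0] at this
  refine Tendsto.congr' ?_ (hbase.mono_left nhdsWithin_le_nhds)
  filter_upwards [hmem] with t ht
  have hvV : iteratedDeriv ℓ v t = iteratedDeriv ℓ (fun t => (t - A0) ^ (2 * m + 1) • Φ t) t := by
    apply Filter.EventuallyEq.iteratedDeriv_eq
    exact Filter.eventuallyEq_of_mem (isOpen_Ioo.mem_nhds ht) key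
  rw [hvV, hGeq]
end
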